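/- Let 0 < p < ∞. For any positive Borel measure μ on 𝔻 that is a p-Carleson measure, μ is a vanishing p-Carleson measure (i.e. μ(S(I))/|I|^p → 0 as |I| → 0) if and only if ‖μ - μ_r‖_p → 0 as r → 1⁻, where μ_r is the restriction of μ to {z : |z| < r} and ‖ν‖_p = sup_{I ⊂ ∂𝔻} ν(S(I))/|I|^p. -/

import Mathlib

open Complex MeasureTheory Metric Set Filter Topology

noncomputable section

/-- Möbius involution σ_a(z) = (a-z)/(1 - conj(a) z). -/
def sig (a z : ℂ) : ℂ := (a - z) / (1 - (starRingEnd ℂ) a * z)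

/-- p-th power of the Dirichlet-type norm:
`|f(0)|^p + (1/π) ∫_𝔻 |f'(z)|^p (1-|z|²)^{p-1} dA(z)`. -/
def DpP (p : ℝ) (f : ℂ → ℂ) : ℝ :=
  ‖f 0‖ ^ p +
    Real.pi⁻¹ * ∫ z in ball (0 : ℂ) 1,
      ‖deriv f z‖ ^ p * (1 - ‖z‖ ^ 2) ^ (p - 1)

/-- The inner F(p,p-1,1) integral at the point `a`:
`(1/π) ∫_𝔻 |F'(z)|^p (1-|z|²)^{p-1} (1-|σ_a(z)|²) dA(z)`. -/
def FpInt (p : ℝ) (F : ℂ → ℂ) (a : ℂ) : ℝ :=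
  Real.pi⁻¹ * ∫ z in ball (0 : ℂ) 1,
    ‖deriv F z‖ ^ p * (1 - ‖z‖ ^ 2) ^ (p - 1) *
      (1 - ‖sig a z‖ ^ 2)

/-- p-th power of the F(p,p-1,1) norm. -/
def FpP (p : ℝ) (F : ℂ → ℂ) : ℝ :=
  ‖F 0‖ ^ p + ⨆ a : ball (0 : ℂ) 1, FpInt p F (a : ℂ)

/-- Volterra operator `T_g f(z) = ∫_0^z f(ξ) g'(ξ) dξ`, parameterized along `[0, z]`. -/
def Tg (g f : ℂ → ℂ) (z : ℂ) : ℂ :=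
  ∫ t in (0 : ℝ)..1, f ((t : ℂ) * z) * deriv g ((t : ℂ) * z) * z

/-- Companion operator `I_g f(z) = ∫_0^z f'(ξ) g(ξ) dξ`. -/
def Ig (g f : ℂ → ℂ) (z : ℂ) : ℂ :=
  ∫ t in (0 : ℝ)..1, deriv f ((t : ℂ) * z) * g ((t : ℂ) * z) * z

/-- Carleson square over the arc of normalized length `h` centered at `e^{iθ}`. -/
def box (θ h : ℝ) : Set ℂ :=
  {z | ∃ r t : ℝ, 1 - h ≤ r ∧ r < 1 ∧ |t| ≤ Real.pi * h ∧
      z = (r : ℂ) * Complex.exp (Complex.I * ((θ : ℂ) + (t : ℂ)))}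

/-- Bloch seminorm `sup_{z∈𝔻} (1-|z|²)|g'(z)|`. -/
def BlochN (g : ℂ → ℂ) : ℝ :=
  ⨆ z : ball (0 : ℂ) 1, (1 - ‖(z : ℂ)‖ ^ 2) * ‖deriv g (z : ℂ)‖

/-- The `p`-Carleson "norm" of a measure, as a supremum over Carleson squares. -/
def cnormE (p : ℝ) (ν : Measure ℂ) : ENNReal :=
  ⨆ θ : ℝ, ⨆ h : Set.Ioc (0 : ℝ) 1,
    ν (box θ (h : ℝ)) / ENNReal.ofReal ((h : ℝ) ^ p)

/-! Squares of side `h ≤ 1 - r` lie in `{r ≤ |z| < 1}`, where `μ` and `μ - μ_r` agree; this gives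
the converse direction. For the direct one, squares of side `h < δ` are controlled by the vanishing
condition, and the mass `μ - μ_r` gives to any larger square is at most `μ{r ≤ |z| < 1}`, which
tends to `0` as `r → 1⁻` because `μ(𝔻) ≤ μ(S(∂𝔻)) < ∞`. -/

lemma tendsto_measure_ball_diff_ball_nhdsLT {X : Type*} [PseudoMetricSpace X]
    [MeasurableSpace X] [OpensMeasurableSpace X] {μ : Measure X} (x : X) {R : ℝ}
    (hR : μ (ball x R) ≠ ⊤) :
    Tendsto (fun r => μ (ball x R \ ball x r)) (𝓝[<] R) (𝓝 0) := by
  set s : ℝ → Set X := fun δ => ball x R \ ball x (R - δ)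
  have hempty : ⋂ δ > 0, s δ = ∅ := by
    refine eq_empty_of_forall_notMem fun y hy => ?_
    simp only [s, mem_iInter, Set.mem_sdiff, mem_ball, not_lt] at hy
    obtain ⟨hyR, -⟩ := hy 1 one_pos
    obtain ⟨-, hy'⟩ := hy ((R - dist y x) / 2) (by linarith)
    linarith
  have hs : Tendsto (μ ∘ s) (𝓝[>] 0) (𝓝 0) := by
    have := tendsto_measure_biInter_gt (μ := μ) (s := s) (a := 0)
      (fun _ _ => (measurableSet_ball.diff measurableSet_ball).nullMeasurableSet)
      (fun δ δ' _ hδ => sdiff_subset_sdiff_right (ball_subset_ball (by linarith)))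
      ⟨1, one_pos, ne_top_of_le_ne_top hR (measure_mono sdiff_subset)⟩
    rwa [hempty, measure_empty] at this
  have hsub : Tendsto (fun r => R - r) (𝓝[<] R) (𝓝[>] 0) :=
    tendsto_nhdsWithin_of_tendsto_nhds_of_eventually_within _
      (by simpa using ((continuous_sub_left R).tendsto R).mono_left nhdsWithin_le_nhds)
      (eventually_nhdsWithin_of_forall fun r hr => sub_pos.mpr (mem_Iio.mp hr))
  simpa [s, Function.comp_def] using hs.comp hsub

lemma box_subset_ball_diff_ball (θ : ℝ) {h : ℝ} (hh : h ≤ 1) :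
    box θ h ⊆ ball 0 1 \ ball 0 (1 - h) := by
  rintro _ ⟨r, t, hr, hr1, -, rfl⟩
  have hnorm : ‖(r : ℂ) * exp (I * ((θ : ℂ) + (t : ℂ)))‖ = r := by
    rw [norm_mul, ← ofReal_add, norm_exp_I_mul_ofReal, mul_one, norm_real,
      Real.norm_of_nonneg (by linarith)]
  simp only [Set.mem_sdiff, mem_ball_zero_iff, hnorm, not_lt]
  exact ⟨hr1, hr⟩

lemma ball_subset_box : ball (0 : ℂ) 1 ⊆ box 0 1 := by
  intro z hz
  rw [mem_ball_zero_iff] at hz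
  refine ⟨‖z‖, arg z, by simp, hz, by simpa using abs_arg_le_pi z, ?_⟩
  rw [ofReal_zero, zero_add, mul_comm I, norm_mul_exp_arg_mul_I]

lemma measure_box_le_cnormE_mul (p : ℝ) (ν : Measure ℂ) (θ : ℝ) {h : ℝ} (h0 : 0 < h)
    (h1 : h ≤ 1) : ν (box θ h) ≤ cnormE p ν * ENNReal.ofReal (h ^ p) :=
  (ENNReal.div_le_iff (by simp [Real.rpow_pos_of_pos h0]) (by simp)).mp <|
    le_iSup_of_le θ (le_iSup_of_le (⟨h, h0, h1⟩ : Ioc (0 : ℝ) 1) le_rfl)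

lemma cnormE_le_of_forall_measure_box_le (p : ℝ) (ν : Measure ℂ) {c : ENNReal}
    (hc : ∀ θ h : ℝ, 0 < h → h ≤ 1 → ν (box θ h) ≤ c * ENNReal.ofReal (h ^ p)) :
    cnormE p ν ≤ c :=
  iSup₂_le fun θ ⟨h, h0, h1⟩ => ENNReal.div_le_of_le_mul (hc θ h h0 h1)

lemma measure_ball_lt_top_of_cnormE_lt_top {p : ℝ} {μ : Measure ℂ} (hc : cnormE p μ < ⊤) :
    μ (ball 0 1) < ⊤ :=
  calc μ (ball 0 1) ≤ μ (box 0 1) := measure_mono ball_subset_box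
    _ ≤ cnormE p μ := by simpa using measure_box_le_cnormE_mul p μ 0 one_pos le_rfl
    _ < ⊤ := hc

lemma cnormE_restrict_compl_ball_le {p ε δ r : ℝ} {μ : Measure ℂ} (hp : 0 ≤ p) (hε : 0 ≤ ε)
    (hδ : 0 ≤ δ)
    (hsmall : ∀ θ h : ℝ, 0 < h → h < δ → h ≤ 1 → μ (box θ h) ≤ ENNReal.ofReal (ε * h ^ p))
    (htail : μ (ball 0 1 \ ball 0 r) ≤ ENNReal.ofReal (ε * δ ^ p)) :
    cnormE p (μ.restrict (ball 0 r)ᶜ) ≤ ENNReal.ofReal ε := by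
  refine cnormE_le_of_forall_measure_box_le p _ fun θ h h0 h1 => ?_
  rw [← ENNReal.ofReal_mul hε]
  rcases lt_or_ge h δ with hhδ | hδh
  · exact (Measure.restrict_apply_le _ _).trans (hsmall θ h h0 hhδ h1)
  · calc μ.restrict (ball 0 r)ᶜ (box θ h) ≤ μ (ball 0 1 \ ball 0 r) := by
          rw [Measure.restrict_apply' measurableSet_ball.compl]
          exact measure_mono fun z ⟨hz, hzr⟩ => ⟨(box_subset_ball_diff_ball θ h1 hz).1, hzr⟩
      _ ≤ ENNReal.ofReal (ε * δ ^ p) := htail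
      _ ≤ ENNReal.ofReal (ε * h ^ p) := by gcongr

lemma measure_box_le_cnormE_restrict_compl_ball_mul (p : ℝ) (μ : Measure ℂ) (θ : ℝ)
    {h r : ℝ} (h0 : 0 < h) (h1 : h ≤ 1) (hhr : h ≤ 1 - r) :
    μ (box θ h) ≤ cnormE p (μ.restrict (ball 0 r)ᶜ) * ENNReal.ofReal (h ^ p) := by
  have hsub : box θ h ⊆ (ball 0 r)ᶜ := fun z hz =>
    fun hzr => (box_subset_ball_diff_ball θ h1 hz).2 (ball_subset_ball (by linarith) hzr)
  rw [← Measure.restrict_eq_self μ hsub]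
  exact measure_box_le_cnormE_mul p _ θ h0 h1

/-- a p-Carleson measure μ is vanishing p-Carleson iff
`‖μ - μ_r‖_p → 0` as `r → 1⁻`. -/
theorem stmt5 (p : ℝ) (hp : 0 < p) (μ : Measure ℂ) (hc : cnormE p μ < ⊤) :
    (∀ ε : ℝ, 0 < ε → ∃ δ : ℝ, 0 < δ ∧ ∀ θ h : ℝ, 0 < h → h < δ → h ≤ 1 →
        μ (box θ h) ≤ ENNReal.ofReal (ε * h ^ p)) ↔
      Tendsto (fun r : ℝ => cnormE p (μ.restrict ((ball (0 : ℂ) r)ᶜ)))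
        (𝓝[<] (1 : ℝ)) (𝓝 0) := by
  refine ⟨fun hvan => ENNReal.tendsto_nhds_zero.mpr fun ε hε => ?_, fun htend ε hε => ?_⟩
  · obtain ⟨ε₀, -, hε₀, hε₀ε⟩ := ENNReal.lt_iff_exists_real_btwn.mp hε
    rw [ENNReal.ofReal_pos] at hε₀
    obtain ⟨δ, hδ, hsmall⟩ := hvan ε₀ hε₀
    have htail := tendsto_measure_ball_diff_ball_nhdsLT (0 : ℂ)
      (measure_ball_lt_top_of_cnormE_lt_top hc).ne
    filter_upwards [ENNReal.tendsto_nhds_zero.mp htail (ENNReal.ofReal (ε₀ * δ ^ p))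
      (ENNReal.ofReal_pos.mpr (by positivity))] with r hr
    exact (cnormE_restrict_compl_ball_le hp.le hε₀.le hδ.le hsmall hr).trans hε₀ε.le
  · obtain ⟨r, hrε, hr1⟩ := ((ENNReal.tendsto_nhds_zero.mp htend _
      (ENNReal.ofReal_pos.mpr hε)).and self_mem_nhdsWithin).exists
    refine ⟨1 - r, sub_pos.mpr hr1, fun θ h h0 hhr h1 => ?_⟩
    calc μ (box θ h) ≤ cnormE p (μ.restrict (ball 0 r)ᶜ) * ENNReal.ofReal (h ^ p) :=
          measure_box_le_cnormE_restrict_compl_ball_mul p μ θ h0 h1 hhr.le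
      _ ≤ ENNReal.ofReal ε * ENNReal.ofReal (h ^ p) := by gcongr
      _ = ENNReal.ofReal (ε * h ^ p) := (ENNReal.ofReal_mul hε.le).symm
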